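/- arXiv:1610.09496 — 3 statements merged into one kernel-verified Lean document; each statement's English description precedes it below -/
import Mathlib

section
/- Let v₀(y) = (3/y²)·e^{y²/4}·(−y + (2+y²)·D₊(y/2)) and v₁(y) = 1 + 2/y², where D₊(y) = e^{−y²}·∫₀^y e^{x²} dx is the Dawson integral. Then the Wronskian satisfies v₀(y)·v₁'(y) − v₀'(y)·v₁(y) = −6·y^{−2}·e^{y²/4} for all y > 0. -/
noncomputable def dawson (y : ℝ) : ℝ := Real.exp (-y^2) * ∫ x in (0:ℝ)..y, Real.exp (x^2)

noncomputable def v₀ (y : ℝ) : ℝ :=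
  3 / y^2 * Real.exp (y^2/4) * (-y + (2 + y^2) * dawson (y/2))

noncomputable def v₁ (y : ℝ) : ℝ := 1 + 2 / y^2

/-!
Direct computation. The Dawson integral satisfies `D₊' = 1 - 2 y D₊`, which makes the `D₊` terms
cancel in the derivative of `v₀`: `v₀' = 6 e^{y²/4} (y - 2 D₊(y/2)) / y³`. Substituting this and
`v₁' = -4 / y³` into the Wronskian, the `D₊` terms cancel once more.
-/

open Real

theorem hasDerivAt_dawson (y : ℝ) : HasDerivAt dawson (1 - 2 * y * dawson y) y := by
  have hint : HasDerivAt (fun t => ∫ x in (0:ℝ)..t, exp (x^2)) (exp (y^2)) y :=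
    ((continuous_pow 2).rexp.integral_hasStrictDerivAt 0 y).hasDerivAt
  have hexp : HasDerivAt (fun t => exp (-t^2)) (exp (-y^2) * -(2 * y)) y := by
    simpa using (hasDerivAt_pow 2 y).fun_neg.exp
  refine (hexp.fun_mul hint).congr_deriv ?_
  rw [dawson, mul_assoc, ← exp_add, neg_add_cancel, exp_zero]
  ring

theorem hasDerivAt_dawson_half (y : ℝ) :
    HasDerivAt (fun t => dawson (t / 2)) ((1 - y * dawson (y / 2)) / 2) y := by
  refine ((hasDerivAt_dawson (y / 2)).comp y ((hasDerivAt_id y).div_const 2)).congr_deriv ?_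
  ring

theorem hasDerivAt_v₁ {y : ℝ} (hy : y ≠ 0) : HasDerivAt v₁ (-4 / y^3) y := by
  refine ((hasDerivAt_const y (2 : ℝ)).fun_div (hasDerivAt_pow 2 y)
    (pow_ne_zero 2 hy)).const_add 1 |>.congr_deriv ?_
  field_simp
  ring

theorem hasDerivAt_v₀ {y : ℝ} (hy : y ≠ 0) :
    HasDerivAt v₀ (6 * exp (y^2/4) * (y - 2 * dawson (y/2)) / y^3) y := by
  have hfactor : HasDerivAt (fun t => 3 / t^2) (-6 / y^3) y := by
    refine ((hasDerivAt_const y (3 : ℝ)).fun_div (hasDerivAt_pow 2 y)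
      (pow_ne_zero 2 hy)).congr_deriv ?_
    field_simp
    ring
  have hgauss : HasDerivAt (fun t => exp (t^2/4)) (exp (y^2/4) * (y/2)) y := by
    refine ((hasDerivAt_pow 2 y).div_const 4).exp.congr_deriv ?_
    ring
  have hbracket : HasDerivAt (fun t => -t + (2 + t^2) * dawson (t/2))
      (-1 + (2 * y * dawson (y/2) + (2 + y^2) * ((1 - y * dawson (y/2)) / 2))) y := by
    refine ((hasDerivAt_id y).fun_neg.fun_add
      (((hasDerivAt_pow 2 y).const_add 2).fun_mul (hasDerivAt_dawson_half y))).congr_deriv ?_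
    simp
  refine ((hfactor.fun_mul hgauss).fun_mul hbracket).congr_deriv ?_
  field_simp
  ring

theorem wronskian_v0_v1 (y : ℝ) (hy : 0 < y) :
    v₀ y * deriv v₁ y - deriv v₀ y * v₁ y = -6 / y^2 * Real.exp (y^2/4) := by
  rw [(hasDerivAt_v₁ hy.ne').deriv, (hasDerivAt_v₀ hy.ne').deriv, v₀, v₁]
  field_simp
  ring
end

section
/- Let v₀(y) = (3/y²)·e^{y²/4}·(−y + (2+y²)·D₊(y/2)) where D₊(y) = e^{−y²}·∫₀^y e^{x²} dx. Then v₀ solves −v₀''(y) − (2/y − y/2)·v₀'(y) + (2/y²)·v₀(y) = 0 for all y > 0. -/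
open Real Filter Topology

noncomputable def gaussPrimitive (t : ℝ) : ℝ := ∫ x in (0:ℝ)..t, exp (x^2)

noncomputable def v₀Numer (y : ℝ) : ℝ := -y * exp (y^2/4) + (2 + y^2) * gaussPrimitive (y/2)

noncomputable def v₀Deriv (y : ℝ) : ℝ := 6 / y^3 * (y * exp (y^2/4) - 2 * gaussPrimitive (y/2))

theorem hasDerivAt_gaussPrimitive (t : ℝ) : HasDerivAt gaussPrimitive (exp (t^2)) t := by
  have hc : Continuous fun x : ℝ => exp (x^2) := by fun_prop
  exact intervalIntegral.integral_hasDerivAt_right (hc.intervalIntegrable _ _)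
    (hc.stronglyMeasurableAtFilter _ _) hc.continuousAt

theorem hasDerivAt_gaussPrimitive_half (y : ℝ) :
    HasDerivAt (fun y => gaussPrimitive (y/2)) (exp (y^2/4) / 2) y := by
  refine ((hasDerivAt_gaussPrimitive (y/2)).comp y
    ((hasDerivAt_id' y).div_const 2)).congr_deriv ?_
  ring_nf

theorem hasDerivAt_exp_sq_div_four (y : ℝ) :
    HasDerivAt (fun y => exp (y^2/4)) (y/2 * exp (y^2/4)) y := by
  refine ((hasDerivAt_exp (y^2/4)).comp y ((hasDerivAt_pow 2 y).div_const 4)).congr_deriv ?_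
  ring

theorem v₀_eq : v₀ = fun y => 3 / y^2 * v₀Numer y := by
  funext y
  have h : exp (y^2/4) * exp (-(y/2)^2) = 1 := by
    rw [← exp_add, show y^2/4 + -(y/2)^2 = 0 by ring, exp_zero]
  simp only [v₀, v₀Numer, dawson, gaussPrimitive]
  linear_combination (3 / y^2 * (2 + y^2) * ∫ x in (0:ℝ)..(y/2), exp (x^2)) * h

theorem hasDerivAt_v₀Numer (y : ℝ) : HasDerivAt v₀Numer (2 * y * gaussPrimitive (y/2)) y := by
  refine (((hasDerivAt_neg' y).mul (hasDerivAt_exp_sq_div_four y)).add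
    (((hasDerivAt_pow 2 y).const_add 2).mul (hasDerivAt_gaussPrimitive_half y))).congr_deriv ?_
  ring

theorem hasDerivAt_v₀_s6 {y : ℝ} (hy : y ≠ 0) : HasDerivAt v₀ (v₀Deriv y) y := by
  rw [v₀_eq]
  refine (((hasDerivAt_const y 3).fun_div (hasDerivAt_pow 2 y) (pow_ne_zero 2 hy)).mul
    (hasDerivAt_v₀Numer y)).congr_deriv ?_
  simp only [v₀Deriv, v₀Numer]
  field_simp
  ring

theorem hasDerivAt_v₀Deriv {y : ℝ} (hy : y ≠ 0) :
    HasDerivAt v₀Deriv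
      (-18 / y^4 * (y * exp (y^2/4) - 2 * gaussPrimitive (y/2)) + 3 / y * exp (y^2/4)) y := by
  have hbracket : HasDerivAt (fun y => y * exp (y^2/4) - 2 * gaussPrimitive (y/2))
      (y^2/2 * exp (y^2/4)) y := by
    refine (((hasDerivAt_id' y).mul (hasDerivAt_exp_sq_div_four y)).sub
      ((hasDerivAt_gaussPrimitive_half y).const_mul 2)).congr_deriv ?_
    ring
  refine (((hasDerivAt_const y 6).fun_div (hasDerivAt_pow 3 y) (pow_ne_zero 3 hy)).mul
    hbracket).congr_deriv ?_
  field_simp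
  ring

theorem deriv_deriv_v₀ {y : ℝ} (hy : y ≠ 0) :
    deriv (deriv v₀) y =
      -18 / y^4 * (y * exp (y^2/4) - 2 * gaussPrimitive (y/2)) + 3 / y * exp (y^2/4) := by
  have h : deriv v₀ =ᶠ[𝓝 y] v₀Deriv := by
    filter_upwards [isOpen_ne.mem_nhds hy] with z hz
    exact (hasDerivAt_v₀_s6 hz).deriv
  rw [h.deriv_eq]
  exact (hasDerivAt_v₀Deriv hy).deriv

theorem v0_solves_L0 (y : ℝ) (hy : 0 < y) :
    -(deriv (deriv v₀) y) - (2/y - y/2) * deriv v₀ y + (2/y^2) * v₀ y = 0 := by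
  rw [deriv_deriv_v₀ hy.ne', (hasDerivAt_v₀_s6 hy.ne').deriv, v₀_eq]
  simp only [v₀Deriv, v₀Numer]
  field_simp
  ring
end

section
/- Suppose f₀ ∈ C^∞([0,∞)) solves f₀''(y) + (2/y − y/2)·f₀'(y) − sin(2f₀(y))/y² = 0 on (0,∞). Then the function W(y) := y·f₀'(y) satisfies −W''(y) − (2/y − y/2)·W'(y) + (2·cos(2f₀(y))/y²)·W(y) = −W(y) for all y > 0, i.e., W is a solution to the eigenvalue equation of the linearized operator with eigenvalue λ₀ = −1. -/
theorem gauge_mode (f₀ : ℝ → ℝ)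
    (hsmooth : ContDiffOn ℝ (⊤ : ℕ∞) f₀ (Set.Ici 0))
    (heq : ∀ y ∈ Set.Ioi (0:ℝ),
      deriv (deriv f₀) y + (2/y - y/2) * deriv f₀ y - Real.sin (2 * f₀ y) / y^2 = 0) :
    ∀ y ∈ Set.Ioi (0:ℝ),
      -(deriv (deriv (fun t => t * deriv f₀ t)) y)
        - (2/y - y/2) * deriv (fun t => t * deriv f₀ t) y
        + (2 * Real.cos (2 * f₀ y) / y^2) * (y * deriv f₀ y)
      = -(y * deriv f₀ y) := by
  have hs0 : ContDiffOn ℝ (⊤ : ℕ∞) f₀ (Set.Ioi 0) :=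
    hsmooth.mono (Set.Ioi_subset_Ici le_rfl)
  have hs1 : ContDiffOn ℝ (⊤ : ℕ∞) (deriv f₀) (Set.Ioi 0) :=
    hs0.deriv_of_isOpen isOpen_Ioi (by simp)
  have hs2 : ContDiffOn ℝ (⊤ : ℕ∞) (deriv (deriv f₀)) (Set.Ioi 0) :=
    hs1.deriv_of_isOpen isOpen_Ioi (by simp)
  have hda : ∀ (g : ℝ → ℝ), ContDiffOn ℝ (⊤ : ℕ∞) g (Set.Ioi 0) →
      ∀ t ∈ Set.Ioi (0:ℝ), DifferentiableAt ℝ g t := fun g hg t ht =>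
    (hg.contDiffAt (isOpen_Ioi.mem_nhds ht)).differentiableAt (by simp)
  intro y hy
  have hy0 : y ≠ 0 := ne_of_gt hy
  -- HasDerivAt facts at y
  have hf0 : HasDerivAt f₀ (deriv f₀ y) y := (hda _ hs0 y hy).hasDerivAt
  have hf1 : HasDerivAt (deriv f₀) (deriv (deriv f₀) y) y := (hda _ hs1 y hy).hasDerivAt
  have hf2 : HasDerivAt (deriv (deriv f₀)) (deriv (deriv (deriv f₀)) y) y :=
    (hda _ hs2 y hy).hasDerivAt
  set f1 := deriv f₀ y
  set f2 := deriv (deriv f₀) y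
  set f3 := deriv (deriv (deriv f₀)) y
  -- first derivative of W = fun t => t * deriv f₀ t, on a neighborhood of y
  have hWd : deriv (fun t => t * deriv f₀ t) =ᶠ[nhds y]
      (fun t => deriv f₀ t + t * deriv (deriv f₀) t) := by
    filter_upwards [isOpen_Ioi.mem_nhds hy] with t ht
    have h := deriv_fun_mul (differentiableAt_fun_id) (hda _ hs1 t ht)
    simpa using h
  have hWy : deriv (fun t => t * deriv f₀ t) y = f1 + y * f2 := by
    have h := deriv_fun_mul (differentiableAt_fun_id) (hda _ hs1 y hy)
    simpa using h
  -- second derivative of W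
  have hW2 : HasDerivAt (fun t => deriv f₀ t + t * deriv (deriv f₀) t)
      (f2 + (1 * f2 + y * f3)) y := hf1.add ((hasDerivAt_id y).mul hf2)
  have hW2' : HasDerivAt (deriv (fun t => t * deriv f₀ t)) (f2 + (1 * f2 + y * f3)) y :=
    hW2.congr_of_eventuallyEq hWd
  have hWyy : deriv (deriv (fun t => t * deriv f₀ t)) y = f2 + (1 * f2 + y * f3) :=
    hW2'.deriv
  -- derivative of the ODE
  have hA : HasDerivAt (fun t : ℝ => 2 / t - t / 2) (2 * -(y ^ 2)⁻¹ - 1 / 2) y := by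
    have h1 : HasDerivAt (fun t : ℝ => 2 / t) (2 * -(y ^ 2)⁻¹) y := by
      simpa [div_eq_mul_inv] using (hasDerivAt_inv hy0).const_mul (2 : ℝ)
    exact h1.sub ((hasDerivAt_id y).div_const 2)
  have hsin : HasDerivAt (fun t => Real.sin (2 * f₀ t))
      (Real.cos (2 * f₀ y) * (2 * f1)) y := (hf0.const_mul 2).sin
  have hsq : HasDerivAt (fun t : ℝ => t ^ 2) (2 * y) y := by
    simpa using hasDerivAt_pow 2 y
  have hsindiv : HasDerivAt (fun t => Real.sin (2 * f₀ t) / t ^ 2)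
      ((Real.cos (2 * f₀ y) * (2 * f1) * y ^ 2 - Real.sin (2 * f₀ y) * (2 * y)) / (y ^ 2) ^ 2)
      y := hsin.div hsq (pow_ne_zero 2 hy0)
  have hE : HasDerivAt
      (fun t => deriv (deriv f₀) t + (2 / t - t / 2) * deriv f₀ t - Real.sin (2 * f₀ t) / t ^ 2)
      (f3 + ((2 * -(y ^ 2)⁻¹ - 1 / 2) * f1 + (2 / y - y / 2) * f2)
        - (Real.cos (2 * f₀ y) * (2 * f1) * y ^ 2 - Real.sin (2 * f₀ y) * (2 * y)) / (y ^ 2) ^ 2)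
      y := (hf2.add (hA.mul hf1)).sub hsindiv
  have hEzero : HasDerivAt
      (fun t => deriv (deriv f₀) t + (2 / t - t / 2) * deriv f₀ t - Real.sin (2 * f₀ t) / t ^ 2)
      0 y := by
    refine (hasDerivAt_const y (0:ℝ)).congr_of_eventuallyEq ?_
    filter_upwards [isOpen_Ioi.mem_nhds hy] with t ht
    exact heq t ht
  have hdE : f3 + ((2 * -(y ^ 2)⁻¹ - 1 / 2) * f1 + (2 / y - y / 2) * f2)
      - (Real.cos (2 * f₀ y) * (2 * f1) * y ^ 2 - Real.sin (2 * f₀ y) * (2 * y)) / (y ^ 2) ^ 2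
      = 0 := hE.unique hEzero
  have hODE := heq y hy
  field_simp at hODE hdE
  have h1 : 2*y^3 * deriv (deriv f₀) y + (4*y^2 - y^4) * deriv f₀ y
      - 2*y*Real.sin (2*f₀ y) = 0 := by linear_combination y * hODE
  have h2 : 4*y^7*f3 + (-8*y^5 - 2*y^7)*f1 + (8*y^6 - 2*y^8)*f2
      - 8*y^5*Real.cos (2*f₀ y)*f1 + 8*y^4*Real.sin (2*f₀ y) = 0 := by
    linear_combination 2*y^4*hdE
  have h2' : 4*y^4*f3 + (-8*y^2 - 2*y^4)*f1 + (8*y^3 - 2*y^5)*f2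
      - 8*y^2*Real.cos (2*f₀ y)*f1 + 8*y*Real.sin (2*f₀ y) = 0 := by
    have h : y^3 * (4*y^4*f3 + (-8*y^2 - 2*y^4)*f1 + (8*y^3 - 2*y^5)*f2
        - 8*y^2*Real.cos (2*f₀ y)*f1 + 8*y*Real.sin (2*f₀ y)) = y^3 * 0 := by
      linear_combination h2
    exact mul_left_cancel₀ (pow_ne_zero 3 hy0) h
  rw [hWyy, hWy]
  field_simp
  apply mul_left_cancel₀ (pow_ne_zero 2 hy0)
  linear_combination (-2)*h1 - (1/2)*h2'
end
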